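/- arXiv:1306.3452 — 8 statements merged into one kernel-verified Lean document; each statement's English description precedes it below -/
import Mathlib

section
/- Let P be a finite set of real numbers and let T = {T_1, ..., T_m} be a t-tolerant Tverberg m-partition of P with m ≥ 2. Then for any two distinct indices i ≠ j, |T_i ∪ T_j| ≥ 2t+3. -/
/-!
Every part has more than `t` points: otherwise deleting the whole part leaves it with an empty
convex hull. Let `M` be the largest point of `T i ∪ T j`, say `M ∈ T i`. Deleting the other points
of `T i` shrinks that part to `{M}`, while `T j` keeps its hull, which lies strictly left of `M`.
So this deletion must be more than `t` points, giving `|T i| ≥ t + 2` and `|T i ∪ T j| ≥ 2t + 3`.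
-/

open Finset

def IsTolerantTverberg {ι E : Type*} [AddCommGroup E] [Module ℝ E] [DecidableEq E] (t : ℕ)
    (P : Finset E) (T : ι → Finset E) : Prop :=
  ∀ R ⊆ P, R.card ≤ t → ∃ x : E, ∀ i, x ∈ convexHull ℝ ((T i \ R : Finset E) : Set E)

lemma notMem_convexHull_of_forall_lt {A : Finset ℝ} {M : ℝ} (h : ∀ a ∈ A, a < M) :
    M ∉ convexHull ℝ (A : Set ℝ) := fun hM =>
  lt_irrefl M (convexHull_min (fun a ha => Set.mem_Iio.mpr (h a ha)) (convex_Iio M) hM)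

namespace IsTolerantTverberg

variable {ι : Type*} {t : ℕ}

lemma lt_card {E : Type*} [AddCommGroup E] [Module ℝ E] [DecidableEq E] {P : Finset E}
    {T : ι → Finset E} (htol : IsTolerantTverberg t P T) {k : ι} (hk : T k ⊆ P) :
    t < (T k).card := by
  by_contra! hle
  obtain ⟨x, hx⟩ := htol (T k) hk hle
  simpa using hx k

lemma add_two_le_card_of_forall_le {P : Finset ℝ} {T : ι → Finset ℝ}
    (htol : IsTolerantTverberg t P T) {i j : ι} (hi : T i ⊆ P) (hij : Disjoint (T i) (T j))
    {M : ℝ} (hM : M ∈ T i) (hmax : ∀ y ∈ T j, y ≤ M) :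
    t + 2 ≤ (T i).card := by
  by_contra! hlt
  have hR : ((T i).erase M).card ≤ t := by rw [card_erase_of_mem hM]; omega
  obtain ⟨x, hx⟩ := htol _ ((erase_subset M (T i)).trans hi) hR
  have hxi := hx i
  rw [sdiff_erase_self hM, coe_singleton, convexHull_singleton] at hxi
  have hxj := hx j
  rw [Set.mem_singleton_iff.mp hxi,
    sdiff_eq_self_of_disjoint (hij.symm.mono_right (erase_subset M (T i)))] at hxj
  refine notMem_convexHull_of_forall_lt (fun y hy => (hmax y hy).lt_of_ne ?_) hxj
  rintro rfl
  exact disjoint_left.mp hij hM hy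

end IsTolerantTverberg

theorem stmt_1_general (m t : ℕ) (P : Finset ℝ) (T : Fin m → Finset ℝ)
    (hdisj : ∀ i j : Fin m, i ≠ j → Disjoint (T i) (T j))
    (hcover : Finset.univ.biUnion T = P)
    (htol : ∀ R ⊆ P, R.card ≤ t →
      ∃ x : ℝ, ∀ i : Fin m, x ∈ convexHull ℝ ((T i \ R : Finset ℝ) : Set ℝ)) :
    ∀ i j : Fin m, i ≠ j → 2 * t + 3 ≤ (T i ∪ T j).card := by
  have htol : IsTolerantTverberg t P T := htol
  intro i j hij
  have hsub : ∀ k, T k ⊆ P := fun k => hcover ▸ subset_biUnion_of_mem T (mem_univ k)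
  have hi := htol.lt_card (hsub i)
  have hj := htol.lt_card (hsub j)
  have hne : (T i ∪ T j).Nonempty :=
    (card_pos.mp (by omega)).mono subset_union_left
  have hmax : ∀ y ∈ T i ∪ T j, y ≤ (T i ∪ T j).max' hne := fun y hy => le_max' _ y hy
  rw [card_union_of_disjoint (hdisj i j hij)]
  rcases mem_union.mp (max'_mem _ hne) with hMi | hMj
  · have := htol.add_two_le_card_of_forall_le (hsub i) (hdisj i j hij) hMi
      (fun y hy => hmax y (mem_union_right _ hy))
    omega
  · have := htol.add_two_le_card_of_forall_le (hsub j) (hdisj j i hij.symm) hMj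
      (fun y hy => hmax y (mem_union_left _ hy))
    omega

/-- In a `t`-tolerant Tverberg `m`-partition (`m ≥ 2`) of a finite set of reals,
any two distinct parts together have at least `2t + 3` elements. -/
theorem stmt_1 (m t : ℕ) (hm : 2 ≤ m) (P : Finset ℝ) (T : Fin m → Finset ℝ)
    (hdisj : ∀ i j : Fin m, i ≠ j → Disjoint (T i) (T j))
    (hcover : Finset.univ.biUnion T = P)
    (htol : ∀ R ⊆ P, R.card ≤ t →
      ∃ x : ℝ, ∀ i : Fin m, x ∈ convexHull ℝ ((T i \ R : Finset ℝ) : Set ℝ)) :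
    ∀ i j : Fin m, i ≠ j → 2 * t + 3 ≤ (T i ∪ T j).card :=
  stmt_1_general m t P T hdisj hcover htol
end

section
/- Let P be a finite set of real numbers with |P| < m(t+2) - 1, where m ≥ 2. Then P has no t-tolerant Tverberg m-partition. -/
/-!
Removing a part `T i` entirely leaves an empty hull, so every part has at least `t + 1` points.
For two parts, let `p` be the least point of their union, say `p ∈ T i`. If `T i` had at most
`t + 1` points, removing all of them but `p` would force the common point to be `p`, which is
not in the hull of the other part, lying strictly to the right of `p`. So of any two parts one
has at least `t + 2` points, and `|P| ≥ (m - 1)(t + 2) + (t + 1) = m(t + 2) - 1`.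
-/

open Finset

def HasTolerantCommonPoint {𝕜 ι : Type*} [Field 𝕜] [LinearOrder 𝕜] [IsStrictOrderedRing 𝕜]
    (t : ℕ) (P : Finset 𝕜) (T : ι → Finset 𝕜) : Prop :=
  ∀ R ⊆ P, #R ≤ t → ∃ x : 𝕜, ∀ i, x ∈ convexHull 𝕜 ((T i \ R : Finset 𝕜) : Set 𝕜)

namespace HasTolerantCommonPoint

variable {𝕜 ι : Type*} [Field 𝕜] [LinearOrder 𝕜] [IsStrictOrderedRing 𝕜]
  {t : ℕ} {P : Finset 𝕜} {T : ι → Finset 𝕜}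

theorem succ_le_card (hT : HasTolerantCommonPoint t P T) {i : ι} (hi : T i ⊆ P) :
    t + 1 ≤ #(T i) := by
  by_contra! h
  obtain ⟨x, hx⟩ := hT (T i) hi (by omega)
  simpa using hx i

theorem add_two_le_card_of_lt (hT : HasTolerantCommonPoint t P T) {i j : ι} (hi : T i ⊆ P)
    {p : 𝕜} (hp : p ∈ T i) (hlt : ∀ q ∈ T j, p < q) : t + 2 ≤ #(T i) := by
  by_contra! h
  obtain ⟨x, hx⟩ := hT ((T i).erase p) ((erase_subset _ _).trans hi)
    (by rw [card_erase_of_mem hp]; omega)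
  have hxp : x = p := by simpa [sdiff_erase_self hp] using hx i
  have hx_gt : x ∈ Set.Ioi p :=
    convexHull_min (fun q hq ↦ hlt q (mem_sdiff.mp hq).1) (convex_Ioi p) (hx j)
  exact (Set.mem_Ioi.mp hx_gt).ne' hxp

theorem add_two_le_card_or (hT : HasTolerantCommonPoint t P T) {i j : ι} (hi : T i ⊆ P)
    (hj : T j ⊆ P) (hij : Disjoint (T i) (T j)) : t + 2 ≤ #(T i) ∨ t + 2 ≤ #(T j) := by
  have hne : (T i ∪ T j).Nonempty :=
    (card_pos.mp (by have := hT.succ_le_card hi; omega)).mono subset_union_left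
  obtain ⟨p, hpU, hmin⟩ := exists_min_image (T i ∪ T j) id hne
  rcases mem_union.mp hpU with hp | hp
  · refine .inl (hT.add_two_le_card_of_lt (j := j) hi hp fun q hq ↦ ?_)
    exact (hmin q (mem_union_right _ hq)).lt_of_ne
      (ne_of_mem_of_not_mem hp (disjoint_right.mp hij hq))
  · refine .inr (hT.add_two_le_card_of_lt (j := i) hj hp fun q hq ↦ ?_)
    exact (hmin q (mem_union_left _ hq)).lt_of_ne
      (ne_of_mem_of_not_mem hp (disjoint_left.mp hij hq))

end HasTolerantCommonPoint

theorem Fintype.card_mul_le_sum_add_one {ι : Type*} [Fintype ι] [DecidableEq ι] {f : ι → ℕ}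
    {a : ℕ} (hle : ∀ i, a ≤ f i) (hlt : ∀ i j, i ≠ j → a < f i ∨ a < f j) :
    Fintype.card ι * (a + 1) ≤ ∑ i, f i + 1 := by
  by_cases hbig : ∀ i, a < f i
  · calc Fintype.card ι * (a + 1) = ∑ _ : ι, (a + 1) := by simp
      _ ≤ ∑ i, f i := sum_le_sum fun i _ ↦ hbig i
      _ ≤ ∑ i, f i + 1 := le_add_right le_rfl
  obtain ⟨i₀, hi₀⟩ := not_forall.mp hbig
  have hpoint : ∀ i, a + 1 ≤ f i + if i = i₀ then 1 else 0 := by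
    intro i
    split_ifs with h
    · have := hle i; omega
    · have := hlt i i₀ h; omega
  calc Fintype.card ι * (a + 1) = ∑ _ : ι, (a + 1) := by simp
    _ ≤ ∑ i, (f i + if i = i₀ then 1 else 0) := sum_le_sum fun i _ ↦ hpoint i
    _ = ∑ i, f i + 1 := by simp [sum_add_distrib]

theorem stmt_2_general (m t : ℕ) (P : Finset ℝ) (hP : P.card < m * (t + 2) - 1) :
    ¬ ∃ T : Fin m → Finset ℝ,
      (∀ i j : Fin m, i ≠ j → Disjoint (T i) (T j)) ∧
      Finset.univ.biUnion T = P ∧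
      (∀ R ⊆ P, R.card ≤ t →
        ∃ x : ℝ, ∀ i : Fin m, x ∈ convexHull ℝ ((T i \ R : Finset ℝ) : Set ℝ)) := by
  rintro ⟨T, hdisj, rfl, htol⟩
  have hT : HasTolerantCommonPoint t (univ.biUnion T) T := htol
  have hsub : ∀ i, T i ⊆ univ.biUnion T := fun i ↦ subset_biUnion_of_mem T (mem_univ i)
  have hcount := Fintype.card_mul_le_sum_add_one (f := fun i ↦ #(T i)) (a := t + 1)
    (fun i ↦ hT.succ_le_card (hsub i))
    (fun i j hij ↦ hT.add_two_le_card_or (hsub i) (hsub j) (hdisj i j hij))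
  rw [card_biUnion fun i _ j _ hij ↦ hdisj i j hij] at hP
  change Fintype.card (Fin m) * (t + 2) ≤ _ at hcount
  rw [Fintype.card_fin] at hcount
  omega

/-- A finite set of reals with fewer than `m(t+2) - 1` points (`m ≥ 2`) has no
`t`-tolerant Tverberg `m`-partition. -/
theorem stmt_2 (m t : ℕ) (hm : 2 ≤ m) (P : Finset ℝ) (hP : P.card < m * (t + 2) - 1) :
    ¬ ∃ T : Fin m → Finset ℝ,
      (∀ i j : Fin m, i ≠ j → Disjoint (T i) (T j)) ∧
      Finset.univ.biUnion T = P ∧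
      (∀ R ⊆ P, R.card ≤ t →
        ∃ x : ℝ, ∀ i : Fin m, x ∈ convexHull ℝ ((T i \ R : Finset ℝ) : Set ℝ)) :=
  stmt_2_general m t P hP
end

section
/- Let P ⊂ ℝ be a set of m(t+2) - 1 distinct real numbers, and let T = {T_1,...,T_m} be a partition of P such that |T_1| = t+1, and writing T_1 = {p_1 < p_2 < ... < p_{t+1}}, each of the t+2 open intervals (-∞, p_1), (p_1, p_2), ..., (p_{t+1}, ∞) contains exactly one point of T_i for every i = 2,...,m. Then T is a t-tolerant Tverberg m-partition of P. -/
/-!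
The candidates for the common point are the points `p j` of the first part. A candidate lies in
`conv (T₁ \ R)` unless `p j ∈ R`, and in `conv (Tᵢ \ R)`, `i ≠ 1`, unless every point of `Tᵢ`
below `p j`, or every point above it, lies in `R`. As `|Tᵢ| = t + 2 > |R|`, some `x ∈ Tᵢ` survives.
Exactly `j + 1` points of `Tᵢ` lie below `p j`; if they are all removed then `p j < x`, so `j + 1`
is at most the number of removed points of `Tᵢ` below `x`, which bounds the number of such
candidates. Symmetrically above `x`. So part `i` rules out at most `|Tᵢ ∩ R|` candidates, all
parts together at most `|R| ≤ t`, and one of the `t + 1` candidates survives.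
-/

open Finset Function

section Sides

variable {α ι : Type*} [LinearOrder α] [Fintype ι] {S R : Finset α} {g : ι → α} {x : α}

theorem card_filter_lower_subset_le (hxS : x ∈ S) (hxR : x ∉ R)
    (hinj : Injective fun j => #(S.filter (· < g j)))
    (hpos : ∀ j, (S.filter (· < g j)).Nonempty) :
    #{j | S.filter (· < g j) ⊆ R} ≤ #((S ∩ R).filter (· < x)) := by
  calc #{j | S.filter (· < g j) ⊆ R}
      ≤ #(Icc 1 #((S ∩ R).filter (· < x))) := by
        refine card_le_card_of_injOn (fun j => #(S.filter (· < g j))) (fun j hj => ?_)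
          hinj.injOn
        have hjR : S.filter (· < g j) ⊆ R := (mem_filter.1 hj).2
        have hgx : g j ≤ x := not_lt.1 fun h => hxR (hjR (mem_filter.2 ⟨hxS, h⟩))
        refine mem_Icc.2 ⟨card_pos.2 (hpos j), card_le_card fun y hy => ?_⟩
        obtain ⟨hyS, hyg⟩ := mem_filter.1 hy
        exact mem_filter.2 ⟨mem_inter.2 ⟨hyS, hjR hy⟩, hyg.trans_le hgx⟩
    _ = #((S ∩ R).filter (· < x)) := by simp

theorem card_filter_upper_subset_le (hxS : x ∈ S) (hxR : x ∉ R)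
    (hinj : Injective fun j => #(S.filter (g j < ·)))
    (hpos : ∀ j, (S.filter (g j < ·)).Nonempty) :
    #{j | S.filter (g j < ·) ⊆ R} ≤ #((S ∩ R).filter (x < ·)) :=
  card_filter_lower_subset_le (α := αᵒᵈ) (g := OrderDual.toDual ∘ g) (x := OrderDual.toDual x)
    hxS hxR hinj hpos

theorem card_filter_lower_or_upper_subset_le [DecidableEq ι] (hSR : ¬S ⊆ R)
    (hlo_inj : Injective fun j => #(S.filter (· < g j)))
    (hlo_pos : ∀ j, (S.filter (· < g j)).Nonempty)
    (hhi_inj : Injective fun j => #(S.filter (g j < ·)))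
    (hhi_pos : ∀ j, (S.filter (g j < ·)).Nonempty) :
    #{j | S.filter (· < g j) ⊆ R ∨ S.filter (g j < ·) ⊆ R} ≤ #(S ∩ R) := by
  obtain ⟨x, hxS, hxR⟩ := not_subset.1 hSR
  calc #{j | S.filter (· < g j) ⊆ R ∨ S.filter (g j < ·) ⊆ R}
      ≤ #{j | S.filter (· < g j) ⊆ R} + #{j | S.filter (g j < ·) ⊆ R} := by
        rw [filter_or]; exact card_union_le _ _
    _ ≤ #((S ∩ R).filter (· < x)) + #((S ∩ R).filter (x < ·)) :=
        add_le_add (card_filter_lower_subset_le hxS hxR hlo_inj hlo_pos)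
          (card_filter_upper_subset_le hxS hxR hhi_inj hhi_pos)
    _ ≤ #((S ∩ R).filter (· < x)) + #((S ∩ R).filter (¬· < x)) := by
        gcongr with y; exact not_lt.2 ∘ le_of_lt
    _ = #(S ∩ R) := card_filter_add_card_filter_not _

end Sides

theorem Finset.card_filter_lt_add_card_filter_gt {α : Type*} [LinearOrder α] {S : Finset α}
    {y : α} (hy : y ∉ S) : #(S.filter (· < y)) + #(S.filter (y < ·)) = #S := by
  rw [← card_filter_add_card_filter_not (s := S) (· < y)]
  congr 2
  refine filter_congr fun z hz => ?_
  simp only [not_lt]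
  exact ⟨le_of_lt, fun h => h.lt_of_ne fun h' => hy (h' ▸ hz)⟩

section Interlacing

variable {α : Type*} [LinearOrder α] {t : ℕ} {S : Finset α} {p : Fin (t + 1) → α}

theorem card_filter_lt_eq_of_interlace (hp : StrictMono p) (hS : ∀ j, p j ∉ S)
    (hlow : #(S.filter (· < p 0)) = 1)
    (hmid : ∀ k : Fin t, #(S.filter fun x => p k.castSucc < x ∧ x < p k.succ) = 1)
    (j : Fin (t + 1)) : #(S.filter (· < p j)) = j + 1 := by
  induction j using Fin.induction with
  | zero => simpa using hlow
  | succ k ih =>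
    have hlt := hp k.castSucc_lt_succ
    have hsplit : S.filter (· < p k.succ) = S.filter (· < p k.castSucc) ∪
        S.filter fun x => p k.castSucc < x ∧ x < p k.succ := by
      ext y
      simp only [mem_filter, mem_union]
      have hne : y ∈ S → y ≠ p k.castSucc := fun hy h => hS _ (h ▸ hy)
      constructor
      · rintro ⟨hy, hyk⟩
        rcases (hne hy).lt_or_gt with h | h
        · exact Or.inl ⟨hy, h⟩
        · exact Or.inr ⟨hy, h, hyk⟩
      · rintro (⟨hy, h⟩ | ⟨hy, -, h⟩)
        exacts [⟨hy, h.trans hlt⟩, ⟨hy, h⟩]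
    have hdisj : Disjoint (S.filter (· < p k.castSucc))
        (S.filter fun x => p k.castSucc < x ∧ x < p k.succ) :=
      disjoint_filter.2 fun y _ h1 h2 => lt_asymm h1 h2.1
    rw [hsplit, card_union_of_disjoint hdisj, ih, hmid k]
    simp

end Interlacing

open Classical in
theorem card_filter_notMem_convexHull_image_le {𝕜 E ι : Type*} [Semiring 𝕜] [PartialOrder 𝕜]
    [AddCommMonoid E] [Module 𝕜 E] [DecidableEq E] [Fintype ι] {p : ι → E} (hp : Injective p)
    (R : Finset E) :
    #{j | p j ∉ convexHull 𝕜 (↑(univ.image p \ R) : Set E)} ≤ #(univ.image p ∩ R) := by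
  refine card_le_card_of_injOn p (fun j hj => ?_) hp.injOn
  refine mem_inter.2 ⟨mem_image_of_mem p (mem_univ j), ?_⟩
  by_contra hjR
  exact (mem_filter.1 hj).2 (subset_convexHull 𝕜 _ (by simp [hjR]))

section ConvexHull

variable {𝕜 : Type*} [Field 𝕜] [LinearOrder 𝕜] [IsStrictOrderedRing 𝕜]

theorem mem_convexHull_of_le_of_le {s : Set 𝕜} {a b x : 𝕜} (ha : a ∈ s) (hb : b ∈ s)
    (hax : a ≤ x) (hxb : x ≤ b) : x ∈ convexHull 𝕜 s :=
  (convex_iff_ordConnected.1 (convex_convexHull 𝕜 s)).out (subset_convexHull 𝕜 s ha)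
    (subset_convexHull 𝕜 s hb) ⟨hax, hxb⟩

theorem mem_convexHull_sdiff_of_not_subset {S R : Finset 𝕜} {y : 𝕜}
    (hlo : ¬S.filter (· < y) ⊆ R) (hhi : ¬S.filter (y < ·) ⊆ R) :
    y ∈ convexHull 𝕜 (↑(S \ R) : Set 𝕜) := by
  obtain ⟨a, ha, haR⟩ := not_subset.1 hlo
  obtain ⟨b, hb, hbR⟩ := not_subset.1 hhi
  rw [mem_filter] at ha hb
  exact mem_convexHull_of_le_of_le (by simp [ha.1, haR]) (by simp [hb.1, hbR]) ha.2.le hb.2.le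

open Classical in
theorem card_filter_notMem_convexHull_le_of_interlace {t : ℕ} {S R : Finset 𝕜}
    {p : Fin (t + 1) → 𝕜} (hp : StrictMono p) (hS : ∀ j, p j ∉ S)
    (hlow : #(S.filter (· < p 0)) = 1)
    (hmid : ∀ k : Fin t, #(S.filter fun x => p k.castSucc < x ∧ x < p k.succ) = 1)
    (hhigh : #(S.filter (p (Fin.last t) < ·)) = 1) (hR : #R ≤ t) :
    #{j | p j ∉ convexHull 𝕜 (↑(S \ R) : Set 𝕜)} ≤ #(S ∩ R) := by
  have hlo := card_filter_lt_eq_of_interlace hp hS hlow hmid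
  have hcard : #S = t + 2 := by
    rw [← card_filter_lt_add_card_filter_gt (hS (Fin.last t)), hlo, hhigh]; simp
  have hhi (j : Fin (t + 1)) : #(S.filter (p j < ·)) = t + 1 - j := by
    have := card_filter_lt_add_card_filter_gt (hS j)
    rw [hlo] at this; omega
  refine (card_le_card fun j hj => ?_).trans
    (card_filter_lower_or_upper_subset_le (g := p) (R := R) ?_ ?_ ?_ ?_ ?_)
  · have hj' := (mem_filter.1 hj).2
    simp only [mem_filter, mem_univ, true_and]
    by_contra! h
    exact hj' (mem_convexHull_sdiff_of_not_subset h.1 h.2)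
  · intro h; have := card_le_card h; omega
  · intro a b h; simp only [hlo] at h; omega
  · intro j; apply card_pos.1; rw [hlo]; omega
  · intro a b h; simp only [hhi] at h; have := a.isLt; have := b.isLt; omega
  · intro j; apply card_pos.1; rw [hhi]; omega

end ConvexHull

theorem Finset.exists_forall_notMem_of_sum_card_lt {ι κ : Type*} [Fintype κ] [DecidableEq κ]
    {s : Finset ι} {B : ι → Finset κ} (h : ∑ i ∈ s, #(B i) < Fintype.card κ) :
    ∃ j, ∀ i ∈ s, j ∉ B i := by
  by_contra! hcover
  have : (univ : Finset κ) ⊆ s.biUnion B := fun j _ => by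
    obtain ⟨i, hi, hj⟩ := hcover j
    exact mem_biUnion.2 ⟨i, hi, hj⟩
  exact (card_le_card this |>.trans card_biUnion_le).not_gt (by simpa using h)

theorem Finset.sum_card_inter_le_of_disjoint {ι α : Type*} [DecidableEq α] {s : Finset ι}
    {T : ι → Finset α} (hT : ∀ i j, i ≠ j → Disjoint (T i) (T j)) (R : Finset α) :
    ∑ i ∈ s, #(T i ∩ R) ≤ #R := by
  rw [← card_biUnion fun i _ j _ hij => (hT i j hij).mono inter_subset_left inter_subset_left]
  exact card_le_card (biUnion_subset.2 fun i _ => inter_subset_right)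

theorem stmt_3_general (m t : ℕ) (hm : 1 ≤ m) (P : Finset ℝ)
    (T : Fin m → Finset ℝ)
    (hdisj : ∀ i j : Fin m, i ≠ j → Disjoint (T i) (T j))
    (p : Fin (t + 1) → ℝ) (hp : StrictMono p)
    (hT1 : T ⟨0, hm⟩ = Finset.image p Finset.univ)
    (hlow : ∀ i : Fin m, i ≠ ⟨0, hm⟩ →
      ((T i).filter (fun x => x < p 0)).card = 1)
    (hmid : ∀ i : Fin m, i ≠ ⟨0, hm⟩ → ∀ k : Fin t,
      ((T i).filter (fun x => p k.castSucc < x ∧ x < p k.succ)).card = 1)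
    (hhigh : ∀ i : Fin m, i ≠ ⟨0, hm⟩ →
      ((T i).filter (fun x => p (Fin.last t) < x)).card = 1) :
    ∀ R ⊆ P, R.card ≤ t →
      ∃ x : ℝ, ∀ i : Fin m, x ∈ convexHull ℝ ((T i \ R : Finset ℝ) : Set ℝ) := by
  classical
  intro R _ hR
  have hbad (i : Fin m) : #{j | p j ∉ convexHull ℝ (↑(T i \ R) : Set ℝ)} ≤ #(T i ∩ R) := by
    by_cases hi : i = ⟨0, hm⟩
    · subst hi; rw [hT1]; exact card_filter_notMem_convexHull_image_le hp.injective R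
    · have hpT (j : Fin (t + 1)) : p j ∉ T i := fun h =>
        disjoint_left.1 (hdisj _ _ (Ne.symm hi)) (hT1 ▸ mem_image_of_mem p (mem_univ j)) h
      exact card_filter_notMem_convexHull_le_of_interlace hp hpT (hlow i hi) (hmid i hi)
        (hhigh i hi) hR
  obtain ⟨j, hj⟩ := exists_forall_notMem_of_sum_card_lt (s := univ) <| calc
      ∑ i, #{j | p j ∉ convexHull ℝ (↑(T i \ R) : Set ℝ)} ≤ ∑ i, #(T i ∩ R) :=
          sum_le_sum fun i _ => hbad i
      _ ≤ #R := sum_card_inter_le_of_disjoint hdisj R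
      _ < Fintype.card (Fin (t + 1)) := by rw [Fintype.card_fin]; omega
  refine ⟨p j, fun i => ?_⟩
  simpa using hj i (mem_univ i)

/-- If `P ⊂ ℝ` has `m(t+2) - 1` points and `T` is a partition of `P` such that
`T 0 = {p 1 < ... < p (t+1)}` has `t+1` points and each of the `t+2` open intervals
determined by `T 0` contains exactly one point of every other part, then `T` is a
`t`-tolerant Tverberg `m`-partition of `P`. -/
theorem stmt_3 (m t : ℕ) (hm : 1 ≤ m) (P : Finset ℝ) (hP : P.card = m * (t + 2) - 1)
    (T : Fin m → Finset ℝ)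
    (hdisj : ∀ i j : Fin m, i ≠ j → Disjoint (T i) (T j))
    (hcover : Finset.univ.biUnion T = P)
    (p : Fin (t + 1) → ℝ) (hp : StrictMono p)
    (hT1 : T ⟨0, hm⟩ = Finset.image p Finset.univ)
    (hlow : ∀ i : Fin m, i ≠ ⟨0, hm⟩ →
      ((T i).filter (fun x => x < p 0)).card = 1)
    (hmid : ∀ i : Fin m, i ≠ ⟨0, hm⟩ → ∀ k : Fin t,
      ((T i).filter (fun x => p k.castSucc < x ∧ x < p k.succ)).card = 1)
    (hhigh : ∀ i : Fin m, i ≠ ⟨0, hm⟩ →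
      ((T i).filter (fun x => p (Fin.last t) < x)).card = 1) :
    ∀ R ⊆ P, R.card ≤ t →
      ∃ x : ℝ, ∀ i : Fin m, x ∈ convexHull ℝ ((T i \ R : Finset ℝ) : Set ℝ) :=
  stmt_3_general m t hm P T hdisj p hp hT1 hlow hmid hhigh
end

section
/- Every set of m(t+2) - 1 distinct real numbers admits a t-tolerant Tverberg m-partition. -/
/-!
Sort `P` and put its `k`-th element into class `k % m`. In dimension one, finite sets have a
common point in their hulls as soon as each has an element below some element of each other.
For classes `i`, `j` and `q ≤ t`, the window of `m` consecutive indices starting at `i + q * m`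
contains an index of class `i` followed by one of class `j`, both below `m * (t + 2) - 1`.
These `t + 1` windows are disjoint, so one of them avoids the at most `t` removed points.
-/

open Finset

theorem exists_forall_mem_convexHull_of_forall_exists_le {ι 𝕜 : Type*} [Fintype ι] [Field 𝕜]
    [LinearOrder 𝕜] [IsStrictOrderedRing 𝕜] (S : ι → Finset 𝕜)
    (h : ∀ i j, ∃ a ∈ S i, ∃ b ∈ S j, a ≤ b) :
    ∃ x, ∀ i, x ∈ convexHull 𝕜 (S i : Set 𝕜) := by
  cases isEmpty_or_nonempty ι
  · exact ⟨0, isEmptyElim⟩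
  have hne (i : ι) : (S i).Nonempty := let ⟨a, ha, _⟩ := h i i; ⟨a, ha⟩
  set x := univ.sup' univ_nonempty fun i => (S i).min' (hne i)
  obtain ⟨k, -, hxk⟩ := exists_mem_eq_sup' univ_nonempty fun i => (S i).min' (hne i)
  refine ⟨x, fun i => ?_⟩
  obtain ⟨a, ha, b, hb, hab⟩ := h k i
  refine segment_subset_convexHull (min'_mem _ (hne i)) hb (Icc_subset_segment ⟨?_, ?_⟩)
  · exact le_sup' (fun i => (S i).min' (hne i)) (mem_univ i)
  · exact hxk.trans_le ((min'_le _ _ ha).trans hab)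

theorem exists_le_of_mod_eq_of_notMem {m t i j : ℕ} (hi : i < m) (hj : j < m) {R : Finset ℕ}
    (hR : #R ≤ t) :
    ∃ k l, k ≤ l ∧ l < m * (t + 2) - 1 ∧ k % m = i ∧ l % m = j ∧ k ∉ R ∧ l ∉ R := by
  obtain ⟨q, hq, hqR⟩ : ∃ q ∈ range (t + 1), q ∉ R.image fun r => (r - i) / m :=
    exists_mem_notMem_of_card_lt_card (card_image_le.trans_lt (by simpa using Nat.lt_succ_of_le hR))
  have hqt : q * m ≤ t * m := Nat.mul_le_mul_right m (Nat.lt_succ_iff.mp (mem_range.mp hq))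
  set d := if i ≤ j then j - i else j + m - i with hd
  have hdm : d < m := by rw [hd]; split_ifs <;> omega
  have hid : (i + d) % m = j := by
    rw [hd]; split_ifs
    · rw [Nat.add_sub_cancel' ‹_›, Nat.mod_eq_of_lt hj]
    · rw [show i + (j + m - i) = j + m by omega, Nat.add_mod_right, Nat.mod_eq_of_lt hj]
  have hwindow (e : ℕ) (he : e < m) : (i + e + q * m - i) / m = q := by
    rw [Nat.add_assoc, Nat.add_sub_cancel_left, Nat.add_mul_div_right _ _ (by omega),
      Nat.div_eq_of_lt he, Nat.zero_add]
  have hnotMem (e : ℕ) (he : e < m) : i + e + q * m ∉ R := fun hmem =>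
    hqR (mem_image.mpr ⟨_, hmem, hwindow e he⟩)
  refine ⟨i + 0 + q * m, i + d + q * m, by omega, ?_, ?_, ?_, hnotMem 0 (by omega),
    hnotMem d hdm⟩
  · have : i + d ≤ 2 * m - 2 := by rw [hd]; split_ifs <;> omega
    have : m * (t + 2) = t * m + 2 * m := by ring
    omega
  · rw [Nat.add_mul_mod_self_right, Nat.add_zero, Nat.mod_eq_of_lt hi]
  · rw [Nat.add_mul_mod_self_right, hid]

section modClasses

variable {α : Type*} {n : ℕ} (s : Fin n ↪ α) (m : ℕ)

def modClasses (i : Fin m) : Finset α :=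
  (univ.filter fun k : Fin n => (k : ℕ) % m = i).map s

variable {s m}

theorem apply_mem_modClasses {k : Fin n} {i : Fin m} (h : (k : ℕ) % m = i) :
    s k ∈ modClasses s m i :=
  mem_map_of_mem s (mem_filter.mpr ⟨mem_univ k, h⟩)

theorem disjoint_modClasses {i j : Fin m} (hij : i ≠ j) :
    Disjoint (modClasses s m i) (modClasses s m j) := by
  rw [modClasses, modClasses, disjoint_map, disjoint_filter]
  exact fun k _ hi hj => hij (Fin.ext (hi.symm.trans hj))

theorem biUnion_modClasses [DecidableEq α] (hm : 0 < m) :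
    univ.biUnion (modClasses s m) = univ.map s := by
  ext x
  simp only [mem_biUnion, mem_univ, true_and, modClasses, mem_map, mem_filter]
  constructor
  · rintro ⟨_, k, _, rfl⟩
    exact ⟨k, rfl⟩
  · rintro ⟨k, rfl⟩
    exact ⟨⟨k % m, Nat.mod_lt _ hm⟩, k, rfl, rfl⟩

end modClasses

/-- Every set of `m(t+2) - 1` distinct real numbers admits a `t`-tolerant
Tverberg `m`-partition. -/
theorem stmt_4 (m t : ℕ) (P : Finset ℝ) (hP : P.card = m * (t + 2) - 1) :
    ∃ T : Fin m → Finset ℝ,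
      (∀ i j : Fin m, i ≠ j → Disjoint (T i) (T j)) ∧
      Finset.univ.biUnion T = P ∧
      (∀ R ⊆ P, R.card ≤ t →
        ∃ x : ℝ, ∀ i : Fin m, x ∈ convexHull ℝ ((T i \ R : Finset ℝ) : Set ℝ)) := by
  rcases Nat.eq_zero_or_pos m with rfl | hm
  · exact ⟨Fin.elim0, fun i => i.elim0, by simpa [eq_comm] using hP,
      fun _ _ _ => ⟨0, fun i => i.elim0⟩⟩
  set s := P.orderEmbOfFin hP
  refine ⟨modClasses s.toEmbedding m, fun i j => disjoint_modClasses, ?_, fun R _ hR => ?_⟩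
  · rw [biUnion_modClasses hm, map_orderEmbOfFin_univ]
  apply exists_forall_mem_convexHull_of_forall_exists_le
  intro i j
  set R' := (univ.filter fun k => s k ∈ R).map Fin.valEmbedding
  have hR' : #R' ≤ t := by
    rw [card_map]
    exact (card_le_card_of_injOn s (fun k hk => (mem_filter.mp hk).2) s.injective.injOn).trans hR
  have hmem {k : Fin (m * (t + 2) - 1)} {i : Fin m} (hki : (k : ℕ) % m = i)
      (hkR : (k : ℕ) ∉ R') :
      s k ∈ modClasses s.toEmbedding m i \ R :=
    mem_sdiff.mpr ⟨apply_mem_modClasses hki,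
      fun h => hkR (mem_map_of_mem _ (mem_filter.mpr ⟨mem_univ k, h⟩))⟩
  obtain ⟨k, l, hkl, hl, hki, hlj, hkR, hlR⟩ := exists_le_of_mod_eq_of_notMem i.2 j.2 hR'
  exact ⟨s ⟨k, hkl.trans_lt hl⟩, hmem hki hkR, s ⟨l, hl⟩, hmem hlj hlR, s.monotone hkl⟩
end

section
/- Let P_1,...,P_k ⊂ ℝ^d be pairwise disjoint finite point sets, and for each i let T_i = {T_{i,1},...,T_{i,m}} be a Tverberg m-partition of P_i with tolerance t_i ≥ 0. Then the partition T of P = ⋃_i P_i whose j-th part is T_j = ⋃_{i=1}^k T_{i,j} is a Tverberg m-partition of P with tolerance t = (∑_{i=1}^k t_i) + k - 1. -/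
/-!
If `R` has at most `∑ tᵢ + k - 1` points, then since the `Pᵢ` are disjoint, pigeonhole gives an
index `i` with `|R ∩ Pᵢ| ≤ tᵢ`. The Tverberg point of the `i`-th partition with `R ∩ Pᵢ` removed
then lies in `conv (T_{i,j} \ R) ⊆ conv (T_j \ R)` for every `j`.
-/

open Finset Function

namespace Finset

variable {ι κ α : Type*} [DecidableEq α]

theorem sum_card_inter_le_card_of_pairwiseDisjoint [Fintype ι] {P : ι → Finset α}
    (hP : Pairwise (Disjoint on P)) (R : Finset α) : ∑ i, #(R ∩ P i) ≤ #R := by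
  rw [← card_biUnion fun i _ j _ hij => (hP hij).mono inter_subset_right inter_subset_right]
  exact card_le_card (biUnion_subset.mpr fun _ _ => inter_subset_left)

theorem exists_card_inter_le_of_card_lt_sum [Fintype ι] {P : ι → Finset α}
    (hP : Pairwise (Disjoint on P)) {R : Finset α} (t : ι → ℕ) (hR : #R < ∑ i, (t i + 1)) :
    ∃ i, #(R ∩ P i) ≤ t i := by
  obtain ⟨i, -, hi⟩ :=
    exists_lt_of_sum_lt ((sum_card_inter_le_card_of_pairwiseDisjoint hP R).trans_lt hR)
  exact ⟨i, Nat.le_of_lt_succ hi⟩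

theorem sdiff_inter_eq_sdiff_of_subset {s p : Finset α} (R : Finset α) (h : s ⊆ p) :
    s \ (R ∩ p) = s \ R := by
  rw [sdiff_inter_distrib_right, sdiff_eq_empty_iff_subset.mpr h, union_empty]

theorem biUnion_biUnion_comm [Fintype ι] [Fintype κ] (T : ι → κ → Finset α) :
    (univ.biUnion fun j => univ.biUnion fun i => T i j) =
      univ.biUnion fun i => univ.biUnion (T i) := by
  ext; simp only [mem_biUnion, mem_univ, true_and]; exact exists_comm

theorem disjoint_biUnion_of_pairwiseDisjoint [Fintype ι] {P : ι → Finset α} {T : ι → κ → Finset α}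
    (hP : Pairwise (Disjoint on P)) (hT : ∀ i, Pairwise (Disjoint on T i))
    (hTP : ∀ i j, T i j ⊆ P i) {j j' : κ} (hj : j ≠ j') :
    Disjoint (univ.biUnion fun i => T i j) (univ.biUnion fun i => T i j') := by
  simp only [disjoint_biUnion_left, disjoint_biUnion_right, mem_univ, forall_const]
  intro i' i
  rcases eq_or_ne i i' with rfl | hi
  · exact hT i hj
  · exact (hP hi).mono (hTP i j) (hTP i' j')

end Finset

/-- Merging `k` Tverberg `m`-partitions with tolerances `t i` of pairwise disjoint
finite sets `P i ⊂ ℝ^d` part-by-part yields a Tverberg `m`-partition of `⋃ i, P i`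
with tolerance `(∑ i, t i) + k - 1`. -/
theorem stmt_5 (d k m : ℕ) (hk : 1 ≤ k) (P : Fin k → Finset (Fin d → ℝ))
    (hPdisj : ∀ i j : Fin k, i ≠ j → Disjoint (P i) (P j))
    (t : Fin k → ℕ) (T : Fin k → Fin m → Finset (Fin d → ℝ))
    (hdisj : ∀ i : Fin k, ∀ j j' : Fin m, j ≠ j' → Disjoint (T i j) (T i j'))
    (hcover : ∀ i : Fin k, Finset.univ.biUnion (T i) = P i)
    (htol : ∀ i : Fin k, ∀ R ⊆ P i, R.card ≤ t i →
      ∃ x : Fin d → ℝ, ∀ j : Fin m,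
        x ∈ convexHull ℝ ((T i j \ R : Finset (Fin d → ℝ)) : Set (Fin d → ℝ))) :
    (∀ j j' : Fin m, j ≠ j' →
      Disjoint (Finset.univ.biUnion fun i => T i j) (Finset.univ.biUnion fun i => T i j')) ∧
    Finset.univ.biUnion (fun j => Finset.univ.biUnion fun i => T i j) = Finset.univ.biUnion P ∧
    (∀ R ⊆ Finset.univ.biUnion P, R.card ≤ (∑ i, t i) + k - 1 →
      ∃ x : Fin d → ℝ, ∀ j : Fin m,
        x ∈ convexHull ℝ
          (((Finset.univ.biUnion fun i => T i j) \ R : Finset (Fin d → ℝ)) : Set (Fin d → ℝ))) := by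
  have hTP : ∀ i j, T i j ⊆ P i := fun i j => hcover i ▸ subset_biUnion_of_mem _ (mem_univ j)
  refine ⟨fun j j' => disjoint_biUnion_of_pairwiseDisjoint hPdisj (fun i _ _ => hdisj i _ _) hTP,
    by simp only [biUnion_biUnion_comm, hcover], fun R _ hR => ?_⟩
  have hR_lt : #R < ∑ i, (t i + 1) := by
    simp only [sum_add_distrib, sum_const, card_univ, Fintype.card_fin, smul_eq_mul, mul_one]
    omega
  obtain ⟨i, hi⟩ := exists_card_inter_le_of_card_lt_sum hPdisj t hR_lt
  obtain ⟨x, hx⟩ := htol i (R ∩ P i) inter_subset_right hi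
  refine ⟨x, fun j => convexHull_mono ?_ (hx j)⟩
  rw [sdiff_inter_eq_sdiff_of_subset R (hTP i j), coe_subset]
  exact sdiff_subset_sdiff (subset_biUnion_of_mem (T · j) (mem_univ i)) le_rfl
end

section
/- Let P ⊂ ℝ^d be a finite set, and embed ℝ^d into ℝ^{d+1} as the hyperplane h: x_{d+1} = 0. Let c ∈ ℝ^d, set t = ⌈|P|/(d+1)⌉ - 1, and let T = T^- ∪ T^+ where T^- consists of t+1 points on the line through c orthogonal to h with negative last coordinate and T^+ consists of t+1 such points with positive last coordinate. Then {P, T} is a t-tolerant Tverberg 2-partition of P ∪ T if and only if c is a centerpoint of P (i.e., c has Tukey depth at least ⌈|P|/(d+1)⌉ with respect to P). -/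
/-!
Lift `P` to the hyperplane `x_{d+1} = 0`. The points of `T` lie on the vertical line through `c`,
so `conv (T \ R)` meets the hyperplane at most in the lift of `c`; and since `|T^±| = t + 1`,
removing `t` points leaves a point of `T` on each side of the hyperplane, so it does contain that
lift. Hence `{P, T}` is `t`-tolerant iff `c ∈ conv (P \ R)` for all `R ⊆ P` with `|R| ≤ t`. By
Hahn–Banach separation this holds iff every closed half-space containing `c` contains at least
`t + 1` points of `P`.
-/

open Finset Matrix

section Lift

variable (R : Type*) [Semiring R] (n : ℕ)

def snocZero : (Fin n → R) →ₗ[R] Fin (n + 1) → R where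
  toFun p := Fin.snoc p 0
  map_add' p q := by
    funext j
    refine Fin.lastCases ?_ (fun i => ?_) j <;> simp
  map_smul' a p := by
    funext j
    refine Fin.lastCases ?_ (fun i => ?_) j <;> simp

variable {R n}

@[simp]
theorem snocZero_apply (p : Fin n → R) : snocZero R n p = Fin.snoc p 0 := rfl

theorem init_snocZero (p : Fin n → R) : Fin.init (snocZero R n p) = p := Fin.init_snoc _ _

theorem snocZero_ne_snoc (p c : Fin n → R) {a : R} (ha : a ≠ 0) :
    snocZero R n p ≠ Fin.snoc c a :=
  fun h => ha <| by simpa using (congrFun h (Fin.last n)).symm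

theorem snocZero_injective : Function.Injective (snocZero R n) :=
  Function.LeftInverse.injective init_snocZero

theorem disjoint_image_snocZero [DecidableEq (Fin (n + 1) → R)] (P : Finset (Fin n → R))
    {T : Finset (Fin (n + 1) → R)} {c : Fin n → R}
    (hT : ∀ q ∈ T, ∃ a : R, a ≠ 0 ∧ q = Fin.snoc c a) :
    Disjoint (P.image (snocZero R n)) T := by
  refine disjoint_left.2 fun x hxP hxT => ?_
  obtain ⟨p, -, rfl⟩ := mem_image.1 hxP
  obtain ⟨a, ha, hpa⟩ := hT _ hxT
  exact snocZero_ne_snoc p c ha hpa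

theorem smul_snoc_add_smul_snoc (x y : Fin n → R) (a b θ μ : R) :
    θ • (Fin.snoc x a : Fin (n + 1) → R) + μ • Fin.snoc y b =
      Fin.snoc (θ • x + μ • y) (θ * a + μ * b) := by
  funext j
  refine Fin.lastCases ?_ (fun i => ?_) j <;> simp

end Lift

section Convex

variable {𝕜 : Type*} [Semiring 𝕜] [PartialOrder 𝕜] {n : ℕ}

theorem snoc_mem_segment (x : Fin n → 𝕜) {a b s : 𝕜} (hs : s ∈ segment 𝕜 a b) :
    (Fin.snoc x s : Fin (n + 1) → 𝕜) ∈ segment 𝕜 (Fin.snoc x a) (Fin.snoc x b) := by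
  obtain ⟨θ, μ, hθ, hμ, hθμ, rfl⟩ := hs
  refine ⟨θ, μ, hθ, hμ, hθμ, ?_⟩
  rw [smul_snoc_add_smul_snoc, ← add_smul, hθμ, one_smul, smul_eq_mul, smul_eq_mul]

theorem init_eq_of_mem_convexHull {s : Set (Fin (n + 1) → 𝕜)} {c : Fin n → 𝕜}
    (hs : ∀ q ∈ s, Fin.init q = c) {x : Fin (n + 1) → 𝕜} (hx : x ∈ convexHull 𝕜 s) :
    Fin.init x = c :=
  convexHull_min hs ((convex_singleton c).linear_preimage (LinearMap.funLeft 𝕜 𝕜 Fin.castSucc)) hx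

theorem mem_convexHull_of_convexHull_image_snocZero_inter_nonempty {S : Set (Fin n → 𝕜)}
    {T : Set (Fin (n + 1) → 𝕜)} {c : Fin n → 𝕜} (hT : ∀ q ∈ T, Fin.init q = c)
    (h : (convexHull 𝕜 (snocZero 𝕜 n '' S) ∩ convexHull 𝕜 T).Nonempty) :
    c ∈ convexHull 𝕜 S := by
  obtain ⟨x, hxS, hxT⟩ := h
  rw [← LinearMap.image_convexHull] at hxS
  obtain ⟨y, hy, rfl⟩ := hxS
  rwa [← init_eq_of_mem_convexHull hT hxT, init_snocZero]

theorem snocZero_mem_convexHull_image_sdiff [DecidableEq (Fin n → 𝕜)]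
    [DecidableEq (Fin (n + 1) → 𝕜)] {P : Finset (Fin n → 𝕜)} {R : Finset (Fin (n + 1) → 𝕜)}
    {c : Fin n → 𝕜} (hc : c ∈ convexHull 𝕜 ↑(P \ {p ∈ P | snocZero 𝕜 n p ∈ R})) :
    snocZero 𝕜 n c ∈ convexHull 𝕜 ↑(P.image (snocZero 𝕜 n) \ R) := by
  have hsub : (P \ {p ∈ P | snocZero 𝕜 n p ∈ R}).image (snocZero 𝕜 n) ⊆
      P.image (snocZero 𝕜 n) \ R := fun x hx => by
    obtain ⟨p, hp, rfl⟩ := mem_image.1 hx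
    obtain ⟨hpP, hpR'⟩ := mem_sdiff.1 hp
    exact mem_sdiff.2 ⟨mem_image_of_mem _ hpP, fun hpR => hpR' (mem_filter.2 ⟨hpP, hpR⟩)⟩
  refine convexHull_mono (coe_subset.2 hsub) ?_
  rw [coe_image, ← LinearMap.image_convexHull]
  exact Set.mem_image_of_mem _ hc

end Convex

theorem snoc_zero_mem_convexHull {n : ℕ} {𝕜 : Type*} [Field 𝕜] [LinearOrder 𝕜]
    [IsStrictOrderedRing 𝕜] {s : Set (Fin (n + 1) → 𝕜)} {c : Fin n → 𝕜} {a b : 𝕜}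
    (ha : a ≤ 0) (hb : 0 ≤ b) (has : Fin.snoc c a ∈ s) (hbs : Fin.snoc c b ∈ s) :
    (Fin.snoc c 0 : Fin (n + 1) → 𝕜) ∈ convexHull 𝕜 s :=
  segment_subset_convexHull has hbs <|
    snoc_mem_segment c (by rw [segment_eq_Icc (ha.trans hb)]; exact ⟨ha, hb⟩)

theorem forall_mem_convexHull_sdiff_iff {ι : Type*} [Fintype ι] [DecidableEq (ι → ℝ)]
    (P : Finset (ι → ℝ)) (c : ι → ℝ) (t : ℕ) :
    (∀ R ⊆ P, #R ≤ t → c ∈ convexHull ℝ (↑(P \ R) : Set (ι → ℝ))) ↔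
      ∀ (v : ι → ℝ) (b : ℝ), b ≤ v ⬝ᵥ c → t + 1 ≤ #{p ∈ P | b ≤ v ⬝ᵥ p} := by
  classical
  constructor
  · intro h v b hb
    by_contra! hlt
    have hc := h _ (filter_subset _ P) (Nat.lt_succ_iff.1 hlt)
    have hsep : convexHull ℝ (↑(P \ {p ∈ P | b ≤ v ⬝ᵥ p}) : Set (ι → ℝ)) ⊆ {x | v ⬝ᵥ x < b} :=
      convexHull_min (fun p hp => by
          obtain ⟨hpP, hpb⟩ := mem_sdiff.1 hp
          exact lt_of_not_ge fun hbp => hpb (mem_filter.2 ⟨hpP, hbp⟩))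
        (convex_halfSpace_lt (dotProductEquiv ℝ ι v).isLinear b)
    exact (hsep hc).not_ge hb
  · intro h R _ hR
    by_contra hc
    obtain ⟨f, u, hfc, hfu⟩ := geometric_hahn_banach_point_closed (convex_convexHull ℝ _)
      ((P \ R).finite_toSet.isClosed_convexHull (𝕜 := ℝ)) hc
    -- The half-space `{f ≤ f c}` contains `c`, and all its points of `P` lie in `R`.
    set v := -(dotProductEquiv ℝ ι).symm f.toLinearMap
    have hv : ∀ x, v ⬝ᵥ x = -f x := fun x => by
      have := LinearMap.congr_fun ((dotProductEquiv ℝ ι).apply_symm_apply f.toLinearMap) x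
      rw [dotProductEquiv_apply_apply] at this
      simp [v, this]
    have hsub : {p ∈ P | v ⬝ᵥ c ≤ v ⬝ᵥ p} ⊆ R := by
      intro p hp
      rw [mem_filter, hv, hv, neg_le_neg_iff] at hp
      by_contra hpR
      exact (hfu p (subset_convexHull ℝ _ (by simp [hp.1, hpR]))).not_ge (by linarith [hp.2])
    have := (h v _ le_rfl).trans (card_le_card hsub)
    omega

theorem stmt_7_general (d t : ℕ) (P : Finset (Fin d → ℝ)) (c : Fin d → ℝ)
    (Tm Tp : Finset (Fin (d + 1) → ℝ))
    (hTmcard : Tm.card = t + 1) (hTpcard : Tp.card = t + 1)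
    (hTm : ∀ q ∈ Tm, ∃ a : ℝ, a < 0 ∧ q = Fin.snoc c a)
    (hTp : ∀ q ∈ Tp, ∃ a : ℝ, 0 < a ∧ q = Fin.snoc c a) :
    (Disjoint (P.image fun p => (Fin.snoc p 0 : Fin (d + 1) → ℝ)) (Tm ∪ Tp) ∧
      ∀ R ⊆ (P.image fun p => (Fin.snoc p 0 : Fin (d + 1) → ℝ)) ∪ (Tm ∪ Tp), R.card ≤ t →
        (convexHull ℝ
            (((P.image fun p => (Fin.snoc p 0 : Fin (d + 1) → ℝ)) \ R :
              Finset (Fin (d + 1) → ℝ)) : Set (Fin (d + 1) → ℝ)) ∩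
          convexHull ℝ
            (((Tm ∪ Tp) \ R : Finset (Fin (d + 1) → ℝ)) : Set (Fin (d + 1) → ℝ))).Nonempty) ↔
    (∀ (v : Fin d → ℝ) (b : ℝ), b ≤ ∑ j, v j * c j →
      t + 1 ≤ (P.filter fun p => b ≤ ∑ j, v j * p j).card) := by
  rw [show (fun p : Fin d → ℝ => (Fin.snoc p 0 : Fin (d + 1) → ℝ)) = snocZero ℝ d from rfl]
  refine Iff.trans ?_ (forall_mem_convexHull_sdiff_iff P c t)
  have hT : ∀ q ∈ Tm ∪ Tp, ∃ a : ℝ, a ≠ 0 ∧ q = Fin.snoc c a := by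
    simp only [mem_union]
    rintro q (hq | hq)
    · obtain ⟨a, ha, rfl⟩ := hTm q hq; exact ⟨a, ha.ne, rfl⟩
    · obtain ⟨a, ha, rfl⟩ := hTp q hq; exact ⟨a, ha.ne', rfl⟩
  constructor
  · rintro ⟨-, htol⟩ R hRP hR
    obtain ⟨x, hxP, hxT⟩ := htol (R.image (snocZero ℝ d))
      ((image_subset_image hRP).trans subset_union_left) (card_image_le.trans hR)
    rw [← image_sdiff _ _ snocZero_injective, coe_image] at hxP
    refine mem_convexHull_of_convexHull_image_snocZero_inter_nonempty (fun q hq => ?_) ⟨x, hxP, hxT⟩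
    obtain ⟨a, -, rfl⟩ := hT q (mem_sdiff.1 hq).1
    exact Fin.init_snoc _ _
  · refine fun hdepth => ⟨disjoint_image_snocZero P hT, fun R _ hRt => ⟨snocZero ℝ d c, ?_, ?_⟩⟩
    · refine snocZero_mem_convexHull_image_sdiff (hdepth _ (filter_subset _ P) ?_)
      exact (card_le_card_of_injOn _ (fun p hp => (mem_filter.1 hp).2)
        snocZero_injective.injOn).trans hRt
    · obtain ⟨qm, hqmT, hqmR⟩ := exists_mem_notMem_of_card_lt_card (s := R) (t := Tm) (by omega)
      obtain ⟨qp, hqpT, hqpR⟩ := exists_mem_notMem_of_card_lt_card (s := R) (t := Tp) (by omega)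
      obtain ⟨a, ha, rfl⟩ := hTm qm hqmT
      obtain ⟨b, hb, rfl⟩ := hTp qp hqpT
      exact snoc_zero_mem_convexHull ha.le hb.le
        (mem_sdiff.2 ⟨mem_union_left _ hqmT, hqmR⟩) (mem_sdiff.2 ⟨mem_union_right _ hqpT, hqpR⟩)

/-- Embed `P ⊂ ℝ^d` into `ℝ^{d+1}` as the hyperplane `x_{d+1} = 0` (via `Fin.snoc · 0`),
let `t + 1 = ⌈|P|/(d+1)⌉`, and let `T = Tm ∪ Tp` consist of `t+1` points on the line
through `c` orthogonal to the hyperplane with negative last coordinate and `t+1` such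
points with positive last coordinate. Then `{P, T}` is a `t`-tolerant Tverberg
`2`-partition of `P ∪ T` if and only if `c` is a centerpoint of `P`. -/
theorem stmt_7 (d t : ℕ) (P : Finset (Fin d → ℝ)) (c : Fin d → ℝ)
    (ht : t + 1 = (P.card + d) / (d + 1))
    (Tm Tp : Finset (Fin (d + 1) → ℝ))
    (hTmcard : Tm.card = t + 1) (hTpcard : Tp.card = t + 1)
    (hTm : ∀ q ∈ Tm, ∃ a : ℝ, a < 0 ∧ q = Fin.snoc c a)
    (hTp : ∀ q ∈ Tp, ∃ a : ℝ, 0 < a ∧ q = Fin.snoc c a) :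
    (Disjoint (P.image fun p => (Fin.snoc p 0 : Fin (d + 1) → ℝ)) (Tm ∪ Tp) ∧
      ∀ R ⊆ (P.image fun p => (Fin.snoc p 0 : Fin (d + 1) → ℝ)) ∪ (Tm ∪ Tp), R.card ≤ t →
        (convexHull ℝ
            (((P.image fun p => (Fin.snoc p 0 : Fin (d + 1) → ℝ)) \ R :
              Finset (Fin (d + 1) → ℝ)) : Set (Fin (d + 1) → ℝ)) ∩
          convexHull ℝ
            (((Tm ∪ Tp) \ R : Finset (Fin (d + 1) → ℝ)) : Set (Fin (d + 1) → ℝ))).Nonempty) ↔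
    (∀ (v : Fin d → ℝ) (b : ℝ), b ≤ ∑ j, v j * c j →
      t + 1 ≤ (P.filter fun p => b ≤ ∑ j, v j * p j).card) :=
  stmt_7_general d t P c Tm Tp hTmcard hTpcard hTm hTp
end

section
/- Let P ⊂ ℝ^d be a finite set of points with pairwise distinct last coordinates, let h be a hyperplane orthogonal to the x_d-axis with half of the points of P strictly on each side, and pair up the points (p_i^-, p_i^+) with p_i^- below h and p_i^+ above h. Let q_i be the intersection of the segment p_i^- p_i^+ with h, regarded as a point in ℝ^{d-1}. If {T'_1,...,T'_m} is a t-tolerant Tverberg m-partition of Q = {q_1,...,q_{|P|/2}}, then the partition {T_1,...,T_m} of P defined by T_j = {p_i^-, p_i^+ : q_i ∈ T'_j} is a t-tolerant Tverberg m-partition of P. -/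
/-!
Each `q i` lies on the hyperplane `x_{d+1} = α` inside the segment from `pm i` to `pp i`.
Hence, for a part `T j` of the lifted partition, the set of `v` with `(v, α) ∈ conv (T j \ R)`
is convex and contains every `q i ∈ T' j` whose two endpoints both survive the removal of `R`.
Removing `R` from `P` destroys at most `|R|` pairs, so the common point `x` of the parts of `Q`
with those `q i` removed lifts to the common point `(x, α)` of the parts of `P` with `R` removed.
Disjointness and covering of the lifted partition hold because all `2N` points of `P` are distinct.
-/

open Finset

theorem Convex.snoc_preimage {𝕜 M : Type*} [Field 𝕜] [LinearOrder 𝕜] [IsStrictOrderedRing 𝕜]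
    [AddCommGroup M] [Module 𝕜 M] {n : ℕ} {s : Set (Fin (n + 1) → M)} (hs : Convex 𝕜 s)
    (c : M) : Convex 𝕜 {v : Fin n → M | (Fin.snoc v c : Fin (n + 1) → M) ∈ s} := by
  intro v hv w hw a b ha hb hab
  show (Fin.snoc (a • v + b • w) c : Fin (n + 1) → M) ∈ s
  convert hs hv hw ha hb hab using 1
  funext k
  refine Fin.lastCases ?_ (fun k => ?_) k
  · simp [Convex.combo_self hab]
  · simp

section PairedPoints

variable {ι E : Type*} [DecidableEq E] {a b : ι → E}

theorem image_union_image_eq_image_product (S : Finset ι) :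
    S.image a ∪ S.image b = (S ×ˢ univ).image fun s : ι × Bool => if s.2 then b s.1 else a s.1 := by
  ext x
  simp [and_or_left, exists_or]

theorem disjoint_image_union_image
    (hab : Function.Injective fun s : ι × Bool => if s.2 then b s.1 else a s.1)
    {S S' : Finset ι} (h : Disjoint S S') :
    Disjoint (S.image a ∪ S.image b) (S'.image a ∪ S'.image b) := by
  rw [image_union_image_eq_image_product, image_union_image_eq_image_product,
    disjoint_image hab, disjoint_product]
  exact Or.inl h

theorem card_filter_mem_or_mem_le [Fintype ι]
    (hab : Function.Injective fun s : ι × Bool => if s.2 then b s.1 else a s.1) (R : Finset E) :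
    #(univ.filter fun i => a i ∈ R ∨ b i ∈ R) ≤ #R := by
  classical
  calc #(univ.filter fun i => a i ∈ R ∨ b i ∈ R)
      ≤ #((R.preimage _ hab.injOn).image Prod.fst) := by
        refine card_le_card fun i hi => ?_
        simp only [mem_filter, mem_univ, true_and] at hi
        simp only [mem_image, mem_preimage, Prod.exists, exists_and_right, exists_eq_right,
          Bool.exists_bool, if_true]
        exact hi
    _ ≤ #(R.preimage _ hab.injOn) := card_image_le
    _ ≤ #R := by
        rw [card_preimage]
        exact card_filter_le _ _

theorem biUnion_image_union_image {κ : Type*} [DecidableEq ι] (s : Finset κ) (T : κ → Finset ι) :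
    (s.biUnion fun j => (T j).image a ∪ (T j).image b) =
      (s.biUnion T).image a ∪ (s.biUnion T).image b := by
  rw [biUnion_union, biUnion_image, biUnion_image]

end PairedPoints

theorem biUnion_filter_mem_eq_univ {ι κ X : Type*} [Fintype ι] [Fintype κ] [DecidableEq ι]
    [DecidableEq X] {q : ι → X} {T : κ → Finset X} (hT : univ.biUnion T = univ.image q) :
    (univ.biUnion fun j => univ.filter fun i => q i ∈ T j) = univ := by
  refine eq_univ_of_forall fun i => ?_
  obtain ⟨j, -, hj⟩ := mem_biUnion.1 (hT ▸ mem_image_of_mem q (mem_univ i))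
  exact mem_biUnion.2 ⟨j, mem_univ j, mem_filter.2 ⟨mem_univ i, hj⟩⟩

theorem snoc_mem_convexHull_image_union_image_sdiff {𝕜 M ι : Type*} [Field 𝕜] [LinearOrder 𝕜]
    [IsStrictOrderedRing 𝕜] [AddCommGroup M] [Module 𝕜 M] [DecidableEq M] [Fintype ι] {d : ℕ}
    {c : M} {pm pp : ι → Fin (d + 1) → M} {q : ι → Fin d → M}
    (hq : ∀ i, (Fin.snoc (q i) c : Fin (d + 1) → M) ∈ segment 𝕜 (pm i) (pp i))
    {T : Finset (Fin d → M)} (hT : T ⊆ univ.image q) (R : Finset (Fin (d + 1) → M))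
    {x : Fin d → M}
    (hx : x ∈ convexHull 𝕜 (↑(T \ (univ.filter fun i => pm i ∈ R ∨ pp i ∈ R).image q) :
      Set (Fin d → M))) :
    (Fin.snoc x c : Fin (d + 1) → M) ∈ convexHull 𝕜
      (↑(((univ.filter fun i => q i ∈ T).image pm ∪ (univ.filter fun i => q i ∈ T).image pp) \ R) :
        Set (Fin (d + 1) → M)) := by
  refine convexHull_min (t := {v | (Fin.snoc v c : Fin (d + 1) → M) ∈ convexHull 𝕜 _})
    (fun v hv => ?_) ((convex_convexHull 𝕜 _).snoc_preimage c) hx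
  simp only [coe_sdiff, Set.mem_sdiff, mem_coe, mem_image, mem_filter, mem_univ, true_and,
    not_exists, not_and] at hv
  obtain ⟨hvT, hvR⟩ := hv
  obtain ⟨i, -, rfl⟩ := mem_image.1 (hT hvT)
  have hpm : pm i ∉ R := fun h => hvR i (Or.inl h) rfl
  have hpp : pp i ∉ R := fun h => hvR i (Or.inr h) rfl
  have hi : i ∈ univ.filter fun i => q i ∈ T := mem_filter.2 ⟨mem_univ i, hvT⟩
  exact (convex_convexHull 𝕜 _).segment_subset
    (subset_convexHull 𝕜 _ (mem_sdiff.2 ⟨mem_union_left _ (mem_image_of_mem pm hi), hpm⟩))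
    (subset_convexHull 𝕜 _ (mem_sdiff.2 ⟨mem_union_right _ (mem_image_of_mem pp hi), hpp⟩)) (hq i)

theorem stmt_8_general (d m t N : ℕ) (α : ℝ)
    (pm pp : Fin N → (Fin (d + 1) → ℝ)) (q : Fin N → (Fin d → ℝ))
    (hdist : Function.Injective
      fun s : Fin N × Bool => (if s.2 then pp s.1 else pm s.1) (Fin.last d))
    (hq : ∀ i, (Fin.snoc (q i) α : Fin (d + 1) → ℝ) ∈ segment ℝ (pm i) (pp i))
    (T' : Fin m → Finset (Fin d → ℝ))
    (hdisj' : ∀ j j' : Fin m, j ≠ j' → Disjoint (T' j) (T' j'))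
    (hcover' : Finset.univ.biUnion T' = Finset.image q Finset.univ)
    (htol' : ∀ R ⊆ Finset.image q Finset.univ, R.card ≤ t →
      ∃ x : Fin d → ℝ, ∀ j : Fin m,
        x ∈ convexHull ℝ ((T' j \ R : Finset (Fin d → ℝ)) : Set (Fin d → ℝ))) :
    (∀ j j' : Fin m, j ≠ j' →
      Disjoint
        ((Finset.univ.filter fun i => q i ∈ T' j).image pm ∪
          (Finset.univ.filter fun i => q i ∈ T' j).image pp)
        ((Finset.univ.filter fun i => q i ∈ T' j').image pm ∪
          (Finset.univ.filter fun i => q i ∈ T' j').image pp)) ∧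
    Finset.univ.biUnion
        (fun j => (Finset.univ.filter fun i => q i ∈ T' j).image pm ∪
          (Finset.univ.filter fun i => q i ∈ T' j).image pp) =
      Finset.image pm Finset.univ ∪ Finset.image pp Finset.univ ∧
    (∀ R ⊆ Finset.image pm Finset.univ ∪ Finset.image pp Finset.univ, R.card ≤ t →
      ∃ x : Fin (d + 1) → ℝ, ∀ j : Fin m,
        x ∈ convexHull ℝ
          ((((Finset.univ.filter fun i => q i ∈ T' j).image pm ∪
              (Finset.univ.filter fun i => q i ∈ T' j).image pp) \ R :
            Finset (Fin (d + 1) → ℝ)) : Set (Fin (d + 1) → ℝ))) := by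
  have hinj : Function.Injective fun s : Fin N × Bool => if s.2 then pp s.1 else pm s.1 :=
    Function.Injective.of_comp (f := fun p : Fin (d + 1) → ℝ => p (Fin.last d)) hdist
  have hT : ∀ j, T' j ⊆ univ.image q := fun j => hcover' ▸ subset_biUnion_of_mem T' (mem_univ j)
  refine ⟨fun j j' hjj' => disjoint_image_union_image hinj ?_, ?_, fun R _ hRcard => ?_⟩
  · exact disjoint_filter.2 fun i _ hj hj' => disjoint_left.1 (hdisj' j j' hjj') hj hj'
  · rw [biUnion_image_union_image, biUnion_filter_mem_eq_univ hcover']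
  · obtain ⟨x, hx⟩ := htol' _ (image_subset_image (subset_univ _))
      (card_image_le.trans ((card_filter_mem_or_mem_le hinj R).trans hRcard))
    exact ⟨Fin.snoc x α, fun j => snoc_mem_convexHull_image_union_image_sdiff hq (hT j) R (hx j)⟩

/-- Dimension reduction: pair up the points of `P ⊂ ℝ^{d+1}` (all with pairwise
distinct last coordinates) across a hyperplane `x_{d+1} = α`, let `q i ∈ ℝ^d` be the
intersection of the segment of the `i`-th pair with the hyperplane. Lifting a
`t`-tolerant Tverberg `m`-partition of `Q = {q i}` (replacing each `q i` by its pair)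
yields a `t`-tolerant Tverberg `m`-partition of `P`. -/
theorem stmt_8 (d m t N : ℕ) (α : ℝ)
    (pm pp : Fin N → (Fin (d + 1) → ℝ)) (q : Fin N → (Fin d → ℝ))
    (hbelow : ∀ i, pm i (Fin.last d) < α) (habove : ∀ i, α < pp i (Fin.last d))
    (hdist : Function.Injective
      fun s : Fin N × Bool => (if s.2 then pp s.1 else pm s.1) (Fin.last d))
    (hq : ∀ i, (Fin.snoc (q i) α : Fin (d + 1) → ℝ) ∈ segment ℝ (pm i) (pp i))
    (T' : Fin m → Finset (Fin d → ℝ))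
    (hdisj' : ∀ j j' : Fin m, j ≠ j' → Disjoint (T' j) (T' j'))
    (hcover' : Finset.univ.biUnion T' = Finset.image q Finset.univ)
    (htol' : ∀ R ⊆ Finset.image q Finset.univ, R.card ≤ t →
      ∃ x : Fin d → ℝ, ∀ j : Fin m,
        x ∈ convexHull ℝ ((T' j \ R : Finset (Fin d → ℝ)) : Set (Fin d → ℝ))) :
    (∀ j j' : Fin m, j ≠ j' →
      Disjoint
        ((Finset.univ.filter fun i => q i ∈ T' j).image pm ∪
          (Finset.univ.filter fun i => q i ∈ T' j).image pp)
        ((Finset.univ.filter fun i => q i ∈ T' j').image pm ∪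
          (Finset.univ.filter fun i => q i ∈ T' j').image pp)) ∧
    Finset.univ.biUnion
        (fun j => (Finset.univ.filter fun i => q i ∈ T' j).image pm ∪
          (Finset.univ.filter fun i => q i ∈ T' j).image pp) =
      Finset.image pm Finset.univ ∪ Finset.image pp Finset.univ ∧
    (∀ R ⊆ Finset.image pm Finset.univ ∪ Finset.image pp Finset.univ, R.card ≤ t →
      ∃ x : Fin (d + 1) → ℝ, ∀ j : Fin m,
        x ∈ convexHull ℝ
          ((((Finset.univ.filter fun i => q i ∈ T' j).image pm ∪
              (Finset.univ.filter fun i => q i ∈ T' j).image pp) \ R :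
            Finset (Fin (d + 1) → ℝ)) : Set (Fin (d + 1) → ℝ))) :=
  stmt_8_general d m t N α pm pp q hdist hq T' hdisj' hcover' htol'
end

section
/- Let T_1, T_2 ⊂ ℝ be disjoint finite sets with |T_1| = |T_2| = t+1. Then there exists a set R ⊆ T_1 ∪ T_2 with |R| = t such that conv(T_1 \ R) ∩ conv(T_2 \ R) = ∅. In particular, {T_1, T_2} is not a t-tolerant Tverberg 2-partition of T_1 ∪ T_2. -/
/-! Say `min T₁ < min T₂`. Removing every point of `T₁` except its minimum `a` leaves `{a}`
against all of `T₂`, whose convex hull lies in `(a, ∞)`. -/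

open Finset

theorem convexHull_subset_Ioi {𝕜 : Type*} [Field 𝕜] [LinearOrder 𝕜] [IsStrictOrderedRing 𝕜]
    {s : Set 𝕜} {a : 𝕜} (h : ∀ x ∈ s, a < x) : convexHull 𝕜 s ⊆ Set.Ioi a :=
  convexHull_min h (convex_Ioi a)

theorem convexHull_sdiff_erase_min'_inter_eq_empty {T₁ T₂ : Finset ℝ} (hdisj : Disjoint T₁ T₂)
    (hne₁ : T₁.Nonempty) (hlt : ∀ x ∈ T₂, T₁.min' hne₁ < x) :
    convexHull ℝ ((T₁ \ T₁.erase (T₁.min' hne₁) : Finset ℝ) : Set ℝ) ∩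
      convexHull ℝ ((T₂ \ T₁.erase (T₁.min' hne₁) : Finset ℝ) : Set ℝ) = ∅ := by
  rw [sdiff_erase_self (T₁.min'_mem hne₁),
    sdiff_eq_self_of_disjoint (hdisj.symm.mono_right (erase_subset _ _)),
    coe_singleton, convexHull_singleton, Set.singleton_inter_eq_empty]
  exact fun hmem => (Set.mem_Ioi.mp (convexHull_subset_Ioi hlt hmem)).false

theorem exists_card_eq_convexHull_sdiff_inter_eq_empty {T₁ T₂ : Finset ℝ}
    (hdisj : Disjoint T₁ T₂) (hne₁ : T₁.Nonempty) (hne₂ : T₂.Nonempty)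
    (hlt : T₁.min' hne₁ < T₂.min' hne₂) :
    ∃ R ⊆ T₁ ∪ T₂, R.card = T₁.card - 1 ∧
      convexHull ℝ ((T₁ \ R : Finset ℝ) : Set ℝ) ∩
        convexHull ℝ ((T₂ \ R : Finset ℝ) : Set ℝ) = ∅ :=
  ⟨T₁.erase (T₁.min' hne₁), (erase_subset _ _).trans subset_union_left,
    card_erase_of_mem (T₁.min'_mem hne₁),
    convexHull_sdiff_erase_min'_inter_eq_empty hdisj hne₁
      fun x hx => hlt.trans_le (T₂.min'_le x hx)⟩

/-- For disjoint `T₁, T₂ ⊂ ℝ` of size `t+1` each, some `R ⊆ T₁ ∪ T₂` of size `t`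
separates the convex hulls; in particular `{T₁, T₂}` is not a `t`-tolerant
Tverberg `2`-partition of `T₁ ∪ T₂`. -/
theorem stmt_9 (t : ℕ) (T1 T2 : Finset ℝ) (hdisj : Disjoint T1 T2)
    (h1 : T1.card = t + 1) (h2 : T2.card = t + 1) :
    (∃ R ⊆ T1 ∪ T2, R.card = t ∧
      convexHull ℝ ((T1 \ R : Finset ℝ) : Set ℝ) ∩
        convexHull ℝ ((T2 \ R : Finset ℝ) : Set ℝ) = ∅) ∧
    ¬ (∀ R ⊆ T1 ∪ T2, R.card ≤ t →
      (convexHull ℝ ((T1 \ R : Finset ℝ) : Set ℝ) ∩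
        convexHull ℝ ((T2 \ R : Finset ℝ) : Set ℝ)).Nonempty) := by
  have hne₁ : T1.Nonempty := card_pos.mp (by omega)
  have hne₂ : T2.Nonempty := card_pos.mp (by omega)
  have hmin : T1.min' hne₁ ≠ T2.min' hne₂ := fun h =>
    disjoint_left.mp hdisj (T1.min'_mem hne₁) (h ▸ T2.min'_mem hne₂)
  have hsep : ∃ R ⊆ T1 ∪ T2, R.card = t ∧
      convexHull ℝ ((T1 \ R : Finset ℝ) : Set ℝ) ∩
        convexHull ℝ ((T2 \ R : Finset ℝ) : Set ℝ) = ∅ := by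
    rcases hmin.lt_or_gt with hlt | hlt
    · simpa [h1] using exists_card_eq_convexHull_sdiff_inter_eq_empty hdisj hne₁ hne₂ hlt
    · obtain ⟨R, hR, hcard, hempty⟩ :=
        exists_card_eq_convexHull_sdiff_inter_eq_empty hdisj.symm hne₂ hne₁ hlt
      exact ⟨R, union_comm T1 T2 ▸ hR, by omega, Set.inter_comm _ _ ▸ hempty⟩
  refine ⟨hsep, fun htol => ?_⟩
  obtain ⟨R, hR, hcard, hempty⟩ := hsep
  exact Set.not_nonempty_empty (hempty ▸ htol R hR hcard.le)
end
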